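/- Let N ≥ 1 and let Ω = (−1,1) × ℝ^{N−1} ⊂ ℝ^N be the infinite slab. Let V : Ω → ℝ be measurable and satisfy −x₁²/(1 − x₁²)² ≤ V(x₁, x') ≤ 0 for almost every (x₁, x') ∈ Ω. Then for every smooth function φ : ℝ^N → ℝ with compact support contained in Ω one has ∫_Ω |∇φ|² dx + ∫_Ω V φ² dx ≥ ∫_Ω φ² dx. -/

import Mathlib

/-!
Ground state substitution: if `w` is `C¹` near the support of `φ`, expanding
`0 ≤ ∫ (∂ᵥφ + w φ)²` and integrating the cross term `2 ∫ w φ ∂ᵥφ = ∫ w ∂ᵥ(φ²)` by parts gives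
`∫ (∂ᵥw - w²) φ² ≤ ∫ (∂ᵥφ)²`. On the slab take `v = e₁` and `w(x) = x₁ / (1 - x₁²)`, which is
`-ψ'/ψ` for `ψ(x) = (1 - x₁²)^(1/2)`. Then `∂₁w - w² = w² + 1 / (1 - x₁²) ≥ w² + 1`, so
`∫ φ² + ∫ w² φ² ≤ ∫ |∇φ|²`; as `V ≥ -w²`, the potential term costs at most `∫ w² φ²`.
-/

open MeasureTheory Topology
open scoped Gradient

theorem Continuous.integrable_sq_of_hasCompactSupport {X : Type*} [TopologicalSpace X]
    [MeasurableSpace X] [OpensMeasurableSpace X] {μ : Measure X} [IsFiniteMeasureOnCompacts μ]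
    {f : X → ℝ} (hf : Continuous f) (hfc : HasCompactSupport f) :
    Integrable (fun x => f x ^ 2) μ := by
  have hsupp : HasCompactSupport fun x => f x ^ 2 :=
    hfc.comp_left (g := fun t : ℝ => t ^ 2) (zero_pow two_ne_zero)
  exact (hf.pow 2).integrable_of_hasCompactSupport hsupp

theorem ContDiffOn.contDiff_mul_of_tsupport_subset {𝕜 E : Type*} [NontriviallyNormedField 𝕜]
    [NormedAddCommGroup E] [NormedSpace 𝕜 E] {n : WithTop ℕ∞} {w φ : E → 𝕜} {U : Set E}
    (hU : IsOpen U) (hw : ContDiffOn 𝕜 n w U) (hφ : ContDiff 𝕜 n φ) (hφU : tsupport φ ⊆ U) :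
    ContDiff 𝕜 n fun x => w x * φ x := by
  refine contDiff_iff_contDiffAt.2 fun x => ?_
  by_cases hx : x ∈ U
  · exact (hw.contDiffAt (hU.mem_nhds hx)).mul hφ.contDiffAt
  · have hφx : φ =ᶠ[𝓝 x] 0 := notMem_tsupport_iff_eventuallyEq.1 fun h => hx (hφU h)
    exact (contDiffAt_const (c := 0)).congr_of_eventuallyEq (hφx.mono fun y hy => by simp [hy])

theorem integral_sq_fderiv_apply_le_integral_norm_gradient_sq {F : Type*} [NormedAddCommGroup F]
    [InnerProductSpace ℝ F] [CompleteSpace F] [MeasurableSpace F] [OpensMeasurableSpace F]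
    {μ : Measure F} [IsFiniteMeasureOnCompacts μ] {φ : F → ℝ} (hφ : ContDiff ℝ 1 φ)
    (hφc : HasCompactSupport φ) {y : F} (hy : ‖y‖ = 1) :
    ∫ x, fderiv ℝ φ x y ^ 2 ∂μ ≤ ∫ x, ‖∇ φ x‖ ^ 2 ∂μ := by
  have hnorm : (fun x => ‖∇ φ x‖ ^ 2) = fun x => ‖fderiv ℝ φ x‖ ^ 2 :=
    funext fun x => by rw [gradient, LinearIsometryEquiv.norm_map]
  have hsupp : HasCompactSupport fun x => ‖fderiv ℝ φ x‖ ^ 2 :=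
    (hφc.fderiv ℝ).comp_left (g := fun L : F →L[ℝ] ℝ => ‖L‖ ^ 2) (by simp)
  have hint : Integrable (fun x => ‖∇ φ x‖ ^ 2) μ := by
    rw [hnorm]
    exact ((hφ.continuous_fderiv one_ne_zero).norm.pow 2).integrable_of_hasCompactSupport hsupp
  refine integral_mono_of_nonneg (.of_forall fun x => sq_nonneg _) hint (.of_forall fun x => ?_)
  dsimp only
  rw [← inner_gradient_left, ← sq_abs]
  gcongr
  simpa [hy] using abs_real_inner_le_norm (∇ φ x) y

theorem fderiv_sub_sq_mul_sq_eq_fderiv_mul {E : Type*} [NormedAddCommGroup E] [NormedSpace ℝ E]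
    {w φ : E → ℝ} {U : Set E} (hU : IsOpen U) (hw : ContDiffOn ℝ 1 w U) (hφ : ContDiff ℝ 1 φ)
    (hφU : tsupport φ ⊆ U) (v : E) :
    (fun x => (fderiv ℝ w x v - w x ^ 2) * φ x ^ 2) = fun x =>
      fderiv ℝ (fun y => w y * φ y) x v * φ x - w x * φ x * fderiv ℝ φ x v - (w x * φ x) ^ 2 := by
  funext x
  by_cases hx : x ∈ tsupport φ
  · have hwx : DifferentiableAt ℝ w x :=
      (hw.differentiableOn one_ne_zero).differentiableAt (hU.mem_nhds (hφU hx))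
    rw [fderiv_fun_mul hwx (hφ.differentiable one_ne_zero x)]
    simp only [add_apply, smul_apply, smul_eq_mul]
    ring
  · have hwφ : x ∉ tsupport fun y => w y * φ y := fun h => hx (tsupport_mul_subset_right h)
    simp [image_eq_zero_of_notMem_tsupport hx, fderiv_of_notMem_tsupport ℝ hwφ]

theorem integrable_fderiv_sub_sq_mul_sq {E : Type*} [NormedAddCommGroup E] [NormedSpace ℝ E]
    [MeasurableSpace E] [OpensMeasurableSpace E] {μ : Measure E} [IsFiniteMeasureOnCompacts μ]
    {w φ : E → ℝ} {U : Set E} (hU : IsOpen U) (hw : ContDiffOn ℝ 1 w U) (hφ : ContDiff ℝ 1 φ)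
    (hφc : HasCompactSupport φ) (hφU : tsupport φ ⊆ U) (v : E) :
    Integrable (fun x => (fderiv ℝ w x v - w x ^ 2) * φ x ^ 2) μ := by
  refine Continuous.integrable_of_hasCompactSupport ?_
    (hφc.comp_left (g := fun t : ℝ => t ^ 2) (zero_pow two_ne_zero)).mul_left
  have ha := hw.contDiff_mul_of_tsupport_subset hU hφ hφU
  have hDa : Continuous fun x => fderiv ℝ (fun y => w y * φ y) x v :=
    (ha.continuous_fderiv one_ne_zero).clm_apply continuous_const
  have hDφ : Continuous fun x => fderiv ℝ φ x v :=
    (hφ.continuous_fderiv one_ne_zero).clm_apply continuous_const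
  rw [fderiv_sub_sq_mul_sq_eq_fderiv_mul hU hw hφ hφU]
  exact ((hDa.mul hφ.continuous).sub (ha.continuous.mul hDφ)).sub (ha.continuous.pow 2)

section GroundState

variable {E : Type*} [NormedAddCommGroup E] [NormedSpace ℝ E] [FiniteDimensional ℝ E]
  [MeasurableSpace E] [BorelSpace E] {μ : Measure E} [μ.IsAddHaarMeasure]

theorem integral_fderiv_mul_sub_mul_fderiv_sub_sq_le {φ a : E → ℝ} (hφ : ContDiff ℝ 1 φ)
    (ha : ContDiff ℝ 1 a) (hφc : HasCompactSupport φ) (hac : HasCompactSupport a) (v : E) :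
    ∫ x, (fderiv ℝ a x v * φ x - a x * fderiv ℝ φ x v - a x ^ 2) ∂μ
      ≤ ∫ x, fderiv ℝ φ x v ^ 2 ∂μ := by
  have hDφ : Continuous fun x => fderiv ℝ φ x v :=
    (hφ.continuous_fderiv one_ne_zero).clm_apply continuous_const
  have hDa : Continuous fun x => fderiv ℝ a x v :=
    (ha.continuous_fderiv one_ne_zero).clm_apply continuous_const
  have hDaφ : Integrable (fun x => fderiv ℝ a x v * φ x) μ :=
    (hDa.mul hφ.continuous).integrable_of_hasCompactSupport hφc.mul_left
  have haDφ : Integrable (fun x => a x * fderiv ℝ φ x v) μ :=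
    (ha.continuous.mul hDφ).integrable_of_hasCompactSupport hac.mul_right
  have haφ : Integrable (fun x => a x * φ x) μ :=
    (ha.continuous.mul hφ.continuous).integrable_of_hasCompactSupport hac.mul_right
  have ha2 : Integrable (fun x => a x ^ 2) μ := ha.continuous.integrable_sq_of_hasCompactSupport hac
  have hDφ2 : Integrable (fun x => fderiv ℝ φ x v ^ 2) μ :=
    hDφ.integrable_sq_of_hasCompactSupport (hφc.fderiv_apply ℝ v)
  have ibp : ∫ x, a x * fderiv ℝ φ x v ∂μ = -∫ x, fderiv ℝ a x v * φ x ∂μ :=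
    integral_mul_fderiv_eq_neg_fderiv_mul_of_integrable hDaφ haDφ haφ
      (fun x _ => ha.differentiable one_ne_zero x) (fun x _ => hφ.differentiable one_ne_zero x)
  calc ∫ x, (fderiv ℝ a x v * φ x - a x * fderiv ℝ φ x v - a x ^ 2) ∂μ
      ≤ ∫ x, (fderiv ℝ φ x v ^ 2 + (fderiv ℝ a x v * φ x + a x * fderiv ℝ φ x v)) ∂μ :=
        integral_mono ((hDaφ.sub haDφ).sub ha2) (hDφ2.add (hDaφ.add haDφ)) fun x => by
          linear_combination sq_nonneg (fderiv ℝ φ x v + a x)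
    _ = ∫ x, fderiv ℝ φ x v ^ 2 ∂μ
          + (∫ x, fderiv ℝ a x v * φ x ∂μ + ∫ x, a x * fderiv ℝ φ x v ∂μ) := by
        rw [← integral_add hDaφ haDφ]
        exact integral_add hDφ2 (hDaφ.add haDφ)
    _ = ∫ x, fderiv ℝ φ x v ^ 2 ∂μ := by rw [ibp, add_neg_cancel, add_zero]

theorem integral_fderiv_sub_sq_mul_sq_le {w φ : E → ℝ} {U : Set E} (hU : IsOpen U)
    (hw : ContDiffOn ℝ 1 w U) (hφ : ContDiff ℝ 1 φ) (hφc : HasCompactSupport φ)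
    (hφU : tsupport φ ⊆ U) (v : E) :
    ∫ x, (fderiv ℝ w x v - w x ^ 2) * φ x ^ 2 ∂μ ≤ ∫ x, fderiv ℝ φ x v ^ 2 ∂μ := by
  rw [fderiv_sub_sq_mul_sq_eq_fderiv_mul hU hw hφ hφU]
  exact integral_fderiv_mul_sub_mul_fderiv_sub_sq_le hφ
    (hw.contDiff_mul_of_tsupport_subset hU hφ hφU) hφc hφc.mul_left v

end GroundState

noncomputable def slabWeight (t : ℝ) : ℝ := t / (1 - t ^ 2)

theorem hasDerivAt_slabWeight {t : ℝ} (ht : 1 - t ^ 2 ≠ 0) :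
    HasDerivAt slabWeight ((1 + t ^ 2) / (1 - t ^ 2) ^ 2) t := by
  have h := (hasDerivAt_id' t).div ((hasDerivAt_const t (1 : ℝ)).sub (hasDerivAt_pow 2 t)) ht
  exact h.congr_deriv (by simp only [Pi.sub_apply]; push_cast; ring)

theorem contDiffOn_slabWeight {n : WithTop ℕ∞} : ContDiffOn ℝ n slabWeight {t | |t| < 1} :=
  contDiffOn_id.div (contDiffOn_const.sub (contDiffOn_id.pow 2)) fun t ht =>
    sub_ne_zero.2 ((sq_lt_one_iff_abs_lt_one t).2 ht).ne'

theorem one_add_two_mul_slabWeight_sq_le {t : ℝ} (ht : |t| < 1) :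
    1 + 2 * slabWeight t ^ 2 ≤ (1 + t ^ 2) / (1 - t ^ 2) ^ 2 := by
  have ht2 : t ^ 2 < 1 := (sq_lt_one_iff_abs_lt_one t).2 ht
  have hpos : 0 < (1 - t ^ 2) ^ 2 := by nlinarith
  rw [slabWeight, div_pow, le_div_iff₀ hpos, add_mul, mul_assoc, div_mul_cancel₀ _ hpos.ne']
  nlinarith

theorem HasDerivAt.fderiv_comp_apply_single {ι : Type*} [Fintype ι] [DecidableEq ι] {g : ℝ → ℝ}
    {g' : ℝ} {x : EuclideanSpace ℝ ι} {i : ι} (h : HasDerivAt g g' (x i)) :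
    fderiv ℝ (fun y : EuclideanSpace ℝ ι => g (y i)) x (EuclideanSpace.single i 1) = g' := by
  have hd : HasFDerivAt (fun y : EuclideanSpace ℝ ι => g (y i))
      (g' • EuclideanSpace.proj (𝕜 := ℝ) i) x :=
    h.comp_hasFDerivAt x (EuclideanSpace.proj (𝕜 := ℝ) i).hasFDerivAt
  simp [hd.fderiv]

def slab {ι : Type*} [Fintype ι] (i : ι) : Set (EuclideanSpace ℝ ι) := {x | |x i| < 1}

theorem isOpen_slab {ι : Type*} [Fintype ι] (i : ι) : IsOpen (slab i) :=
  isOpen_lt (EuclideanSpace.proj (𝕜 := ℝ) i).continuous.abs continuous_const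

theorem contDiffOn_slabWeight_apply {ι : Type*} [Fintype ι] (i : ι) {n : WithTop ℕ∞} :
    ContDiffOn ℝ n (fun x : EuclideanSpace ℝ ι => slabWeight (x i)) (slab i) :=
  contDiffOn_slabWeight.comp_continuousLinearMap (EuclideanSpace.proj (𝕜 := ℝ) i)

theorem integrable_slabWeight_mul_sq {ι : Type*} [Fintype ι] {i : ι}
    {φ : EuclideanSpace ℝ ι → ℝ} (hφ : ContDiff ℝ 1 φ) (hφc : HasCompactSupport φ)
    (hφS : tsupport φ ⊆ slab i) :
    Integrable fun x => (slabWeight (x i) * φ x) ^ 2 := by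
  have hwφ := (contDiffOn_slabWeight_apply i).contDiff_mul_of_tsupport_subset (isOpen_slab i) hφ hφS
  exact hwφ.continuous.integrable_sq_of_hasCompactSupport hφc.mul_left

theorem integral_sq_add_integral_slabWeight_mul_sq_le {ι : Type*} [Fintype ι] (i : ι)
    {φ : EuclideanSpace ℝ ι → ℝ} (hφ : ContDiff ℝ 1 φ) (hφc : HasCompactSupport φ)
    (hφS : tsupport φ ⊆ slab i) :
    (∫ x, φ x ^ 2) + ∫ x, (slabWeight (x i) * φ x) ^ 2 ≤ ∫ x, ‖∇ φ x‖ ^ 2 := by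
  classical
  set w := fun x : EuclideanSpace ℝ ι => slabWeight (x i)
  set e : EuclideanSpace ℝ ι := EuclideanSpace.single i 1
  have hφ2 : Integrable fun x => φ x ^ 2 := hφ.continuous.integrable_sq_of_hasCompactSupport hφc
  have hwφ := integrable_slabWeight_mul_sq hφ hφc hφS
  have hpointwise (x) : φ x ^ 2 + (w x * φ x) ^ 2 ≤ (fderiv ℝ w x e - w x ^ 2) * φ x ^ 2 := by
    by_cases hx : x ∈ slab i
    · have hne : 1 - x i ^ 2 ≠ 0 := sub_ne_zero.2 ((sq_lt_one_iff_abs_lt_one _).2 hx).ne'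
      rw [(hasDerivAt_slabWeight hne).fderiv_comp_apply_single]
      nlinarith [mul_le_mul_of_nonneg_right (one_add_two_mul_slabWeight_sq_le hx) (sq_nonneg (φ x))]
    · simp [image_eq_zero_of_notMem_tsupport fun h => hx (hφS h)]
  calc (∫ x, φ x ^ 2) + ∫ x, (w x * φ x) ^ 2 = ∫ x, (φ x ^ 2 + (w x * φ x) ^ 2) :=
        (integral_add hφ2 hwφ).symm
    _ ≤ ∫ x, (fderiv ℝ w x e - w x ^ 2) * φ x ^ 2 :=
        integral_mono (hφ2.add hwφ)
          (integrable_fderiv_sub_sq_mul_sq (isOpen_slab i) (contDiffOn_slabWeight_apply i) hφ hφc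
            hφS e) hpointwise
    _ ≤ ∫ x, fderiv ℝ φ x e ^ 2 :=
        integral_fderiv_sub_sq_mul_sq_le (isOpen_slab i) (contDiffOn_slabWeight_apply i) hφ hφc
          hφS e
    _ ≤ ∫ x, ‖∇ φ x‖ ^ 2 :=
        integral_sq_fderiv_apply_le_integral_norm_gradient_sq hφ hφc (by simp [e])

theorem ground_state_slab {N : ℕ} (hN : 1 ≤ N)
    (Ω : Set (EuclideanSpace ℝ (Fin N)))
    (hΩ : Ω = {x : EuclideanSpace ℝ (Fin N) | |x ⟨0, hN⟩| < 1})
    {V : EuclideanSpace ℝ (Fin N) → ℝ}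
    (hV : ∀ᵐ x ∂(volume.restrict Ω),
      -((x ⟨0, hN⟩) ^ 2 / (1 - (x ⟨0, hN⟩) ^ 2) ^ 2) ≤ V x ∧ V x ≤ 0)
    (φ : EuclideanSpace ℝ (Fin N) → ℝ) (hφ : ContDiff ℝ (⊤ : ℕ∞) φ)
    (hφc : HasCompactSupport φ) (hφΩ : tsupport φ ⊆ Ω) :
    (∫ x in Ω, (φ x) ^ 2)
      ≤ (∫ x in Ω, ‖gradient φ x‖ ^ 2) + ∫ x in Ω, V x * (φ x) ^ 2 := by
  set i : Fin N := ⟨0, hN⟩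
  obtain rfl : Ω = slab i := hΩ
  have hφ0 (x) (hx : x ∉ slab i) : φ x = 0 := image_eq_zero_of_notMem_tsupport fun h => hx (hφΩ h)
  have hφ1 : ContDiff ℝ 1 φ := hφ.of_le (by exact_mod_cast le_top)
  have hpotential :
      ∫ x in slab i, -(V x * φ x ^ 2) ≤ ∫ x in slab i, (slabWeight (x i) * φ x) ^ 2 := by
    refine integral_mono_of_nonneg ?_ (integrable_slabWeight_mul_sq hφ1 hφc hφΩ).restrict ?_ <;>
      filter_upwards [hV] with x hx
    · exact neg_nonneg.2 (mul_nonpos_of_nonpos_of_nonneg hx.2 (sq_nonneg _))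
    · rw [slabWeight, mul_pow, div_pow]
      nlinarith [sq_nonneg (φ x)]
  rw [integral_neg, setIntegral_eq_integral_of_forall_compl_eq_zero
    (f := fun x => (slabWeight (x i) * φ x) ^ 2) fun x hx => by simp [hφ0 x hx]] at hpotential
  rw [setIntegral_eq_integral_of_forall_compl_eq_zero (f := fun x => φ x ^ 2) fun x hx => by
      simp [hφ0 x hx],
    setIntegral_eq_integral_of_forall_compl_eq_zero (f := fun x => ‖∇ φ x‖ ^ 2) fun x hx => by
      simp [gradient, fderiv_of_notMem_tsupport ℝ fun h => hx (hφΩ h)]]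
  linarith [integral_sq_add_integral_slabWeight_mul_sq_le i hφ1 hφc hφΩ]
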